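/- arXiv:1302.2774 — 2 statements merged into one kernel-verified Lean document; each statement's English description precedes it below -/
import Mathlib

section
/- Let E be a closed symmetric monoidal category, (T, μ, η) a monad on E, and σ a tensorial strength for the functor T with corresponding E-enrichment φ. Then (T, μ, η, σ) is a strong monad, i.e. σ additionally satisfies σ_{X,Y} ∘ (id_X ⊗ η_Y) = η_{X⊗Y} and σ_{X,Y} ∘ (id_X ⊗ μ_Y) = μ_{X⊗Y} ∘ T(σ_{X,Y}) ∘ σ_{X,T(Y)}, if and only if η and μ are E-natural transformations with respect to φ (and the induced composite enrichment of T∘T). Consequently, extensions of the monad (T, μ, η) to a strong monad correspond bijectively to extensions to an E-enriched monad. -/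
open CategoryTheory MonoidalCategory MonoidalClosed Limits

universe v u

namespace PaperMorita

variable {C : Type u} [Category.{v} C] [MonoidalCategory C] [SymmetricCategory C]
  [MonoidalClosed C]

/-- The transpose of `f : X ⊗ A ⟶ B` under the adjunction `- ⊗ A ⊣ [A,-]`
(obtained from Mathlib's `tensorLeft` adjunction via the symmetry). -/
noncomputable def rcurry {X A B : C} (f : X ⊗ A ⟶ B) : X ⟶ (ihom A).obj B :=
  MonoidalClosed.curry ((β_ A X).hom ≫ f)

/-- The inverse transpose of `g : X ⟶ [A,B]`, a morphism `X ⊗ A ⟶ B`. -/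
noncomputable def runcurry {X A B : C} (g : X ⟶ (ihom A).obj B) : X ⊗ A ⟶ B :=
  (β_ X A).hom ≫ MonoidalClosed.uncurry g

/-- The evaluation morphism `ev_A : [A,B] ⊗ A ⟶ B`. -/
noncomputable def ev (A B : C) : (((ihom A).obj B) ⊗ A) ⟶ B :=
  (β_ _ _).hom ≫ (ihom.ev A).app B

/-- The coevaluation morphism `γ_A : X ⟶ [A, X ⊗ A]`, adjoint to the identity of `X ⊗ A`. -/
noncomputable def coev (A X : C) : X ⟶ (ihom A).obj (X ⊗ A) :=
  rcurry (𝟙 (X ⊗ A))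

/-- The unit morphism `j_A : I ⟶ [A,A]`. -/
noncomputable def junit (A : C) : 𝟙_ C ⟶ (ihom A).obj A :=
  rcurry (λ_ A).hom

/-- The internal composition morphism `c : [B,D] ⊗ [A,B] ⟶ [A,D]`, characterized by
`ev ∘ (c ⊗ id) = ev ∘ (id ⊗ ev)`. -/
noncomputable def icomp (A B D : C) : (((ihom B).obj D) ⊗ ((ihom A).obj B)) ⟶ ((ihom A).obj D) :=
  rcurry ((α_ _ _ _).hom ≫ (_ ◁ ev A B) ≫ ev B D)

/-- A tensorial strength for an endofunctor `T`, in the sense of Kock: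
a natural family `σ_{X,Y} : X ⊗ T(Y) ⟶ T(X ⊗ Y)` satisfying the unit and
associativity axioms. -/
structure Strength (T : C ⥤ C) where
  σ : ∀ X Y : C, X ⊗ T.obj Y ⟶ T.obj (X ⊗ Y)
  naturality_left : ∀ {X X' : C} (f : X ⟶ X') (Y : C),
    (f ▷ T.obj Y) ≫ σ X' Y = σ X Y ≫ T.map (f ▷ Y)
  naturality_right : ∀ (X : C) {Y Y' : C} (f : Y ⟶ Y'),
    (X ◁ T.map f) ≫ σ X Y' = σ X Y ≫ T.map (X ◁ f)
  unit : ∀ Y : C, σ (𝟙_ C) Y ≫ T.map (λ_ Y).hom = (λ_ (T.obj Y)).hom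
  assoc : ∀ X Y Z : C,
    (α_ X Y (T.obj Z)).hom ≫ (X ◁ σ Y Z) ≫ σ X (Y ⊗ Z)
      = σ (X ⊗ Y) Z ≫ T.map (α_ X Y Z).hom

/-- An `E`-enrichment of an endofunctor `T` of the closed symmetric monoidal category `E`:
a natural family `φ_{A,B} : [A,B] ⟶ [T(A),T(B)]` satisfying the unit and composition
axioms and inducing the action of `T` on morphisms under `E(A,B) ≅ E(I,[A,B])`. -/
structure Enrichment (T : C ⥤ C) where
  φ : ∀ A B : C, ((ihom A).obj B) ⟶ ((ihom (T.obj A)).obj (T.obj B))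
  naturality_right : ∀ (A : C) {B B' : C} (g : B ⟶ B'),
    φ A B ≫ (ihom (T.obj A)).map (T.map g) = (ihom A).map g ≫ φ A B'
  naturality_left : ∀ {A' A : C} (f : A' ⟶ A) (B : C),
    φ A B ≫ (MonoidalClosed.pre (T.map f)).app (T.obj B)
      = (MonoidalClosed.pre f).app B ≫ φ A' B
  unit : ∀ A : C, junit A ≫ φ A A = junit (T.obj A)
  comp : ∀ A B D : C,
    icomp A B D ≫ φ A D = (φ B D ⊗ₘ φ A B) ≫ icomp (T.obj A) (T.obj B) (T.obj D)
  induces : ∀ {A B : C} (f : A ⟶ B),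
    rcurry ((λ_ A).hom ≫ f) ≫ φ A B = rcurry ((λ_ (T.obj A)).hom ≫ T.map f)

/-- The enrichment family associated to a tensorial strength:
`φ_{A,B}` is adjoint to `T(ev_A) ∘ σ_{[A,B],A}`. -/
noncomputable def strengthToEnrichmentHom {T : C ⥤ C} (S : Strength T) (A B : C) :
    ((ihom A).obj B) ⟶ ((ihom (T.obj A)).obj (T.obj B)) :=
  rcurry (S.σ ((ihom A).obj B) A ≫ T.map (ev A B))

/-- The strength family associated to an enrichment family `φ`:
`σ_{X,A} = ev_{T(A)} ∘ ((φ_{A,X⊗A} ∘ γ_A) ⊗ id_{T(A)})`. -/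
noncomputable def enrichmentToStrengthHom {T : C ⥤ C}
    (φ : ∀ A B : C, ((ihom A).obj B) ⟶ ((ihom (T.obj A)).obj (T.obj B))) (X A : C) :
    X ⊗ T.obj A ⟶ T.obj (X ⊗ A) :=
  ((coev A X ≫ φ A (X ⊗ A)) ▷ T.obj A) ≫ ev (T.obj A) (T.obj (X ⊗ A))

/-- The two compatibilities of a tensorial strength with the unit and the multiplication
of a monad, which make `(T, μ, η, σ)` a strong monad in the sense of Kock. -/
def IsStrongMonadStrength (M : Monad C) (S : Strength (M : C ⥤ C)) : Prop :=
  (∀ X Y : C, (X ◁ M.η.app Y) ≫ S.σ X Y = M.η.app (X ⊗ Y)) ∧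
  (∀ X Y : C, (X ◁ M.μ.app Y) ≫ S.σ X Y
      = S.σ X ((M : C ⥤ C).obj Y) ≫ (M : C ⥤ C).map (S.σ X Y) ≫ M.μ.app (X ⊗ Y))

/-- `η` and `μ` of a monad are `E`-natural with respect to an enrichment family `φ` of its
underlying functor (for `η`, with respect to the identity enrichment of `𝟭`; for `μ`,
with respect to the composite enrichment `φ_{TA,TB} ∘ φ_{A,B}` of `T ∘ T`). -/
def IsEnrichedMonadFamily (M : Monad C)
    (φ : ∀ A B : C, ((ihom A).obj B) ⟶
      ((ihom ((M : C ⥤ C).obj A)).obj ((M : C ⥤ C).obj B))) : Prop :=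
  (∀ A B : C,
    (ihom A).map (M.η.app B)
      = φ A B ≫ (MonoidalClosed.pre (M.η.app A)).app ((M : C ⥤ C).obj B)) ∧
  (∀ A B : C,
    (φ A B ≫ φ ((M : C ⥤ C).obj A) ((M : C ⥤ C).obj B))
        ≫ (ihom ((M : C ⥤ C).obj ((M : C ⥤ C).obj A))).map (M.μ.app B)
      = φ A B ≫ (MonoidalClosed.pre (M.μ.app A)).app ((M : C ⥤ C).obj B))

/-!
Everything is computed on transposes, since a morphism into `[A,B]` is determined by its
transpose `runcurry`. The transpose of `φ_{A,B}` is `T(ev) ∘ σ_{[A,B],A}`, and conversely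
`σ_{X,A}` is the transpose of `φ_{A,X⊗A} ∘ γ_A`; more generally the transpose of `φ ∘ g` is
`T(runcurry g) ∘ σ`. Transposing the `E`-naturality square of `η` (resp. `μ`) at `A, B`
therefore gives the strong-monad axiom at `[A,B], A` followed by `T(ev)`, modulo naturality
of `η` (resp. `μ`); conversely, the axiom at `X, Y` is the square at `Y, X ⊗ Y` precomposed
with `γ`. The same two formulas make strengths and enrichments mutually inverse.
-/

section Transpose

variable {X X' Y A A' B B' D : C}

@[simp] lemma runcurry_rcurry (f : X ⊗ A ⟶ B) : runcurry (rcurry f) = f := by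
  simp [runcurry, rcurry]

@[simp] lemma rcurry_runcurry (g : X ⟶ (ihom A).obj B) : rcurry (runcurry g) = g := by
  simp [runcurry, rcurry]

lemma runcurry_injective : Function.Injective (runcurry (X := X) (A := A) (B := B)) :=
  fun g h e => by rw [← rcurry_runcurry g, e, rcurry_runcurry]

lemma runcurry_eq (g : X ⟶ (ihom A).obj B) : runcurry g = (g ▷ A) ≫ ev A B := by
  rw [runcurry, ev, uncurry_eq, ← BraidedCategory.braiding_naturality_left_assoc]

@[simp] lemma runcurry_id : runcurry (𝟙 ((ihom A).obj B)) = ev A B := by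
  simp [runcurry_eq]

lemma runcurry_comp (g : X ⟶ X') (k : X' ⟶ (ihom A).obj B) :
    runcurry (g ≫ k) = (g ▷ A) ≫ runcurry k := by
  simp [runcurry_eq]

lemma runcurry_comp_ihom_map (g : X ⟶ (ihom A).obj B) (h : B ⟶ B') :
    runcurry (g ≫ (ihom A).map h) = runcurry g ≫ h := by
  simp [runcurry, uncurry_natural_right]

lemma runcurry_ihom_map (h : B ⟶ B') :
    runcurry ((ihom A).map h : (ihom A).obj B ⟶ _) = ev A B ≫ h := by
  rw [← Category.id_comp ((ihom A).map h), runcurry_comp_ihom_map, runcurry_id]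

lemma runcurry_comp_pre (g : X ⟶ (ihom A).obj B) (f : A' ⟶ A) :
    runcurry (g ≫ (MonoidalClosed.pre f).app B) = (X ◁ f) ≫ runcurry g := by
  rw [runcurry, uncurry_natural_left, MonoidalClosed.uncurry_pre, runcurry, uncurry_eq,
    ← BraidedCategory.braiding_naturality_left_assoc,
    ← BraidedCategory.braiding_naturality_right_assoc,
    ← BraidedCategory.braiding_naturality_left_assoc g A, whisker_exchange_assoc]

lemma runcurry_pre_app (f : A' ⟶ A) :
    runcurry ((MonoidalClosed.pre f).app B) = (((ihom A).obj B) ◁ f) ≫ ev A B := by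
  rw [← Category.id_comp ((MonoidalClosed.pre f).app B), runcurry_comp_pre, runcurry_id]

@[simp] lemma runcurry_coev : runcurry (coev A X) = 𝟙 (X ⊗ A) := by
  simp [coev]

@[simp] lemma runcurry_junit : runcurry (junit A) = (λ_ A).hom := by
  simp [junit]

lemma runcurry_tensorHom_comp_icomp (f : X ⟶ (ihom B).obj D) (g : Y ⟶ (ihom A).obj B) :
    runcurry ((f ⊗ₘ g) ≫ icomp A B D)
      = (α_ X Y A).hom ≫ (X ◁ runcurry g) ≫ runcurry f := by
  rw [runcurry_comp, icomp, runcurry_rcurry, MonoidalCategory.tensorHom_def, comp_whiskerRight,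
    Category.assoc, associator_naturality_middle_assoc, ← MonoidalCategory.whiskerLeft_comp_assoc,
    ← runcurry_eq, associator_naturality_left_assoc, ← whisker_exchange_assoc, ← runcurry_eq]

lemma eq_coev_comp_ihom_map_runcurry (g : X ⟶ (ihom A).obj B) :
    g = coev A X ≫ (ihom A).map (runcurry g) := by
  apply runcurry_injective
  rw [runcurry_comp_ihom_map, runcurry_coev, Category.id_comp]

lemma coev_naturality (f : X ⟶ X') : f ≫ coev A X' = coev A X ≫ (ihom A).map (f ▷ A) := by
  apply runcurry_injective
  rw [runcurry_comp, runcurry_comp_ihom_map]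
  simp

lemma coev_comp_pre (f : A ⟶ A') :
    coev A' X ≫ (MonoidalClosed.pre f).app (X ⊗ A') = coev A X ≫ (ihom A).map (X ◁ f) := by
  apply runcurry_injective
  rw [runcurry_comp_pre, runcurry_comp_ihom_map]
  simp

lemma coev_comp_ihom_map_leftUnitor : coev A (𝟙_ C) ≫ (ihom A).map (λ_ A).hom = junit A := by
  apply runcurry_injective
  rw [runcurry_comp_ihom_map, runcurry_coev, runcurry_junit, Category.id_comp]

lemma coev_tensorHom_coev_comp_icomp (X Y Z : C) :
    (coev (Y ⊗ Z) X ⊗ₘ coev Z Y) ≫ icomp Z (Y ⊗ Z) (X ⊗ (Y ⊗ Z))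
      = coev Z (X ⊗ Y) ≫ (ihom Z).map (α_ X Y Z).hom := by
  apply runcurry_injective
  rw [runcurry_comp_ihom_map, runcurry_tensorHom_comp_icomp]
  simp

end Transpose

section StrengthToEnrichment

variable {T : C ⥤ C} (S : Strength T)

lemma runcurry_strengthToEnrichmentHom (A B : C) :
    runcurry (strengthToEnrichmentHom S A B) = S.σ ((ihom A).obj B) A ≫ T.map (ev A B) := by
  simp [strengthToEnrichmentHom]

lemma runcurry_comp_strengthToEnrichmentHom {X A B : C} (g : X ⟶ (ihom A).obj B) :
    runcurry (g ≫ strengthToEnrichmentHom S A B) = S.σ X A ≫ T.map (runcurry g) := by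
  rw [runcurry_comp, runcurry_strengthToEnrichmentHom, ← Category.assoc, S.naturality_left,
    Category.assoc, ← T.map_comp, ← runcurry_eq]

lemma Strength.σ_eq_runcurry (X A : C) :
    S.σ X A = runcurry (coev A X ≫ strengthToEnrichmentHom S A (X ⊗ A)) := by
  rw [runcurry_comp_strengthToEnrichmentHom, runcurry_coev, T.map_id, Category.comp_id]

lemma icomp_comp_strengthToEnrichmentHom (A B D : C) :
    icomp A B D ≫ strengthToEnrichmentHom S A D
      = (strengthToEnrichmentHom S B D ⊗ₘ strengthToEnrichmentHom S A B)
          ≫ icomp (T.obj A) (T.obj B) (T.obj D) := by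
  apply runcurry_injective
  have hσ := S.assoc ((ihom B).obj D) ((ihom A).obj B) A
  have hev := S.naturality_right ((ihom B).obj D) (ev A B)
  rw [runcurry_comp_strengthToEnrichmentHom, runcurry_tensorHom_comp_icomp,
    runcurry_strengthToEnrichmentHom, runcurry_strengthToEnrichmentHom, icomp, runcurry_rcurry,
    MonoidalCategory.whiskerLeft_comp_assoc, reassoc_of% hev, reassoc_of% hσ]
  simp

noncomputable def Strength.toEnrichment : Enrichment T where
  φ := strengthToEnrichmentHom S
  naturality_right A B B' g := by
    apply runcurry_injective
    rw [runcurry_comp_ihom_map, runcurry_strengthToEnrichmentHom,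
      runcurry_comp_strengthToEnrichmentHom, runcurry_ihom_map, Category.assoc, ← T.map_comp]
  naturality_left f B := by
    apply runcurry_injective
    rw [runcurry_comp_pre, runcurry_comp_strengthToEnrichmentHom, runcurry_pre_app,
      runcurry_strengthToEnrichmentHom, ← Category.assoc, S.naturality_right, Category.assoc,
      ← T.map_comp]
  unit A := by
    apply runcurry_injective
    rw [runcurry_comp_strengthToEnrichmentHom, runcurry_junit, S.unit, runcurry_junit]
  comp := icomp_comp_strengthToEnrichmentHom S
  induces f := by
    apply runcurry_injective
    rw [runcurry_comp_strengthToEnrichmentHom, runcurry_rcurry, runcurry_rcurry, T.map_comp,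
      ← Category.assoc, S.unit]

end StrengthToEnrichment

section EnrichmentToStrength

variable {T : C ⥤ C} (E : Enrichment T)

lemma enrichmentToStrengthHom_eq_runcurry
    (φ : ∀ A B : C, ((ihom A).obj B) ⟶ ((ihom (T.obj A)).obj (T.obj B))) (X A : C) :
    enrichmentToStrengthHom φ X A = runcurry (coev A X ≫ φ A (X ⊗ A)) := by
  rw [enrichmentToStrengthHom, runcurry_eq]

lemma Enrichment.runcurry_comp_φ {X A B : C} (g : X ⟶ (ihom A).obj B) :
    runcurry (g ≫ E.φ A B) = enrichmentToStrengthHom E.φ X A ≫ T.map (runcurry g) := by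
  conv_lhs => rw [eq_coev_comp_ihom_map_runcurry g]
  rw [Category.assoc, ← E.naturality_right, ← Category.assoc, runcurry_comp_ihom_map,
    ← enrichmentToStrengthHom_eq_runcurry]

lemma enrichmentToStrengthHom_assoc (X Y Z : C) :
    (α_ X Y (T.obj Z)).hom ≫ (X ◁ enrichmentToStrengthHom E.φ Y Z)
        ≫ enrichmentToStrengthHom E.φ X (Y ⊗ Z)
      = enrichmentToStrengthHom E.φ (X ⊗ Y) Z ≫ T.map (α_ X Y Z).hom := by
  rw [enrichmentToStrengthHom_eq_runcurry E.φ (X ⊗ Y), ← runcurry_comp_ihom_map,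
    Category.assoc, E.naturality_right, ← Category.assoc (coev Z (X ⊗ Y))]
  -- `γ` into `X ⊗ Y ⊗ Z` factors through the internal composite of two `γ`s, so `E.comp` applies
  rw [← coev_tensorHom_coev_comp_icomp, Category.assoc, E.comp, tensorHom_comp_tensorHom_assoc,
    runcurry_tensorHom_comp_icomp, ← enrichmentToStrengthHom_eq_runcurry,
    ← enrichmentToStrengthHom_eq_runcurry]

noncomputable def Enrichment.toStrength : Strength T where
  σ := enrichmentToStrengthHom E.φ
  naturality_left f Y := by
    rw [enrichmentToStrengthHom_eq_runcurry, enrichmentToStrengthHom_eq_runcurry,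
      ← runcurry_comp, ← Category.assoc, coev_naturality, Category.assoc, ← E.naturality_right,
      ← Category.assoc, runcurry_comp_ihom_map]
  naturality_right X Y Y' f := by
    rw [enrichmentToStrengthHom_eq_runcurry, enrichmentToStrengthHom_eq_runcurry,
      ← runcurry_comp_pre, Category.assoc, E.naturality_left, ← Category.assoc, coev_comp_pre,
      Category.assoc, ← E.naturality_right, ← Category.assoc, runcurry_comp_ihom_map]
  unit Y := by
    rw [enrichmentToStrengthHom_eq_runcurry, ← runcurry_comp_ihom_map, Category.assoc,
      E.naturality_right, ← Category.assoc, coev_comp_ihom_map_leftUnitor, E.unit,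
      runcurry_junit]
  assoc := enrichmentToStrengthHom_assoc E

lemma strengthToEnrichmentHom_toStrength : strengthToEnrichmentHom E.toStrength = E.φ := by
  funext A B
  apply runcurry_injective
  rw [runcurry_strengthToEnrichmentHom, ← runcurry_id, ← Category.id_comp (E.φ A B)]
  exact (E.runcurry_comp_φ _).symm

end EnrichmentToStrength

lemma enrichmentToStrengthHom_strengthToEnrichmentHom {T : C ⥤ C} (S : Strength T) :
    enrichmentToStrengthHom (strengthToEnrichmentHom S) = S.σ := by
  funext X A
  rw [enrichmentToStrengthHom_eq_runcurry, ← Strength.σ_eq_runcurry]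

lemma Strength.ext_σ {𝒞 : Type*} [Category 𝒞] [MonoidalCategory 𝒞] {T : 𝒞 ⥤ 𝒞}
    {S S' : Strength T} (h : S.σ = S'.σ) : S = S' := by
  cases S; cases S'; subst h; rfl

lemma Enrichment.ext_φ {T : C ⥤ C} {E E' : Enrichment T} (h : E.φ = E'.φ) : E = E' := by
  cases E; cases E'; subst h; rfl

section Monad

variable (M : Monad C) (S : Strength (M : C ⥤ C))

lemma strength_η_compat_iff :
    (∀ X Y : C, (X ◁ M.η.app Y) ≫ S.σ X Y = M.η.app (X ⊗ Y)) ↔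
    ∀ A B : C, (ihom A).map (M.η.app B)
      = strengthToEnrichmentHom S A B
          ≫ (MonoidalClosed.pre (M.η.app A)).app ((M : C ⥤ C).obj B) := by
  constructor
  · intro h A B
    apply runcurry_injective
    dsimp only [Functor.id_obj]
    rw [runcurry_ihom_map, runcurry_comp_pre, runcurry_strengthToEnrichmentHom,
      ← Category.assoc, h]
    exact M.η.naturality (ev A B)
  · intro h X Y
    rw [S.σ_eq_runcurry, ← runcurry_comp_pre, Category.assoc, ← h]
    dsimp only [Functor.id_obj]
    rw [runcurry_comp_ihom_map, runcurry_coev, Category.id_comp]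

lemma strength_μ_compat_iff :
    (∀ X Y : C, (X ◁ M.μ.app Y) ≫ S.σ X Y
      = S.σ X ((M : C ⥤ C).obj Y) ≫ (M : C ⥤ C).map (S.σ X Y) ≫ M.μ.app (X ⊗ Y)) ↔
    ∀ A B : C,
      (strengthToEnrichmentHom S A B
          ≫ strengthToEnrichmentHom S ((M : C ⥤ C).obj A) ((M : C ⥤ C).obj B))
        ≫ (ihom ((M : C ⥤ C).obj ((M : C ⥤ C).obj A))).map (M.μ.app B)
      = strengthToEnrichmentHom S A B
          ≫ (MonoidalClosed.pre (M.μ.app A)).app ((M : C ⥤ C).obj B) := by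
  constructor
  · intro h A B
    apply runcurry_injective
    rw [runcurry_comp_ihom_map, runcurry_comp_strengthToEnrichmentHom,
      runcurry_strengthToEnrichmentHom, runcurry_comp_pre, runcurry_strengthToEnrichmentHom,
      reassoc_of% h, Functor.map_comp, Category.assoc, Category.assoc, ← M.μ.naturality]
    rfl
  · intro h X Y
    rw [S.σ_eq_runcurry X Y, ← runcurry_comp_pre, Category.assoc, ← h]
    dsimp only [Functor.comp_obj]
    rw [← Category.assoc, ← Category.assoc, runcurry_comp_ihom_map,
      runcurry_comp_strengthToEnrichmentHom, Category.assoc, ← S.σ_eq_runcurry]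

lemma isStrongMonadStrength_iff :
    IsStrongMonadStrength M S ↔ IsEnrichedMonadFamily M (strengthToEnrichmentHom S) :=
  and_congr (strength_η_compat_iff M S) (strength_μ_compat_iff M S)

end Monad

noncomputable def strongMonadEquivEnrichedMonad (M : Monad C) :
    { S : Strength (M : C ⥤ C) // IsStrongMonadStrength M S } ≃
      { E : Enrichment (M : C ⥤ C) // IsEnrichedMonadFamily M E.φ } where
  toFun S := ⟨S.1.toEnrichment, (isStrongMonadStrength_iff M S.1).mp S.2⟩
  invFun E := ⟨E.1.toStrength, (isStrongMonadStrength_iff M _).mpr <| by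
    rw [strengthToEnrichmentHom_toStrength]; exact E.2⟩
  left_inv S := Subtype.ext <| Strength.ext_σ <|
    enrichmentToStrengthHom_strengthToEnrichmentHom S.1
  right_inv E := Subtype.ext <| Enrichment.ext_φ <| strengthToEnrichmentHom_toStrength E.1

/-- Let `(T, μ, η)` be a monad on a closed symmetric monoidal category and
`σ` a tensorial strength for its underlying functor, with corresponding enrichment `φ`.
Then `(T, μ, η, σ)` is a strong monad if and only if `η` and `μ` are `E`-natural with
respect to `φ` (and the induced composite enrichment of `T ∘ T`).  Consequently,
extensions of the monad to a strong monad correspond bijectively to extensions to an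
`E`-enriched monad. -/
theorem strongMonad_iff_enrichedMonad (M : Monad C) :
    (∀ S : Strength (M : C ⥤ C),
      IsStrongMonadStrength M S ↔ IsEnrichedMonadFamily M (strengthToEnrichmentHom S)) ∧
    ∃ e : { S : Strength (M : C ⥤ C) // IsStrongMonadStrength M S } ≃
          { E : Enrichment (M : C ⥤ C) // IsEnrichedMonadFamily M E.φ },
      ∀ (S : { S : Strength (M : C ⥤ C) // IsStrongMonadStrength M S }) (A B : C),
        ((e S) : Enrichment (M : C ⥤ C)).φ A B = strengthToEnrichmentHom S.1 A B :=
  ⟨isStrongMonadStrength_iff M, strongMonadEquivEnrichedMonad M, fun _ _ _ => rfl⟩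

end PaperMorita
end

section
/- Let E be a closed symmetric monoidal category with braiding β and (T, μ, η, σ) a strong monad on E, and define the dual strength σ'_{A,X} := T(β_{X,A}) ∘ σ_{X,A} ∘ β_{T(A),X} : T(A) ⊗ X ⟶ T(A ⊗ X). For a T-algebra (Y, ξ) and an object A of E, let ξ^A : T([A,Y]) ⟶ [A,Y] be the morphism adjoint to the composite ξ ∘ T(ev_A) ∘ σ'_{[A,Y],A} : T([A,Y]) ⊗ A ⟶ T([A,Y] ⊗ A) ⟶ T(Y) ⟶ Y. Then ([A,Y], ξ^A) is a T-algebra. -/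
open CategoryTheory MonoidalCategory MonoidalClosed Limits

universe v u

namespace PaperMorita

variable {C : Type u} [Category.{v} C] [MonoidalCategory C] [SymmetricCategory C]
  [MonoidalClosed C]

/-- The dual tensorial strength `σ'_{B,X} : T(B) ⊗ X ⟶ T(B ⊗ X)` obtained from a
tensorial strength via the braiding: `σ'_{B,X} = T(β_{X,B}) ∘ σ_{X,B} ∘ β_{T(B),X}`. -/
noncomputable def dualStrength {T : C ⥤ C} (S : Strength T) (B X : C) :
    T.obj B ⊗ X ⟶ T.obj (B ⊗ X) :=
  (β_ (T.obj B) X).hom ≫ S.σ X B ≫ T.map (β_ X B).hom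

/-- For a `T`-algebra `(Y, ξ)` and an object `A`, the cotensor structure morphism
`ξ^A : T([A,Y]) ⟶ [A,Y]`, adjoint to `ξ ∘ T(ev_A) ∘ σ'_{[A,Y],A}`. -/
noncomputable def cotensorStructMap (M : Monad C) (S : Strength (M : C ⥤ C))
    (Y : M.Algebra) (A : C) :
    (M : C ⥤ C).obj ((ihom A).obj Y.A) ⟶ (ihom A).obj Y.A :=
  rcurry (dualStrength S ((ihom A).obj Y.A) A ≫ (M : C ⥤ C).map (ev A Y.A) ≫ Y.a)

end PaperMorita

/-!
Write `ext f := ξ ∘ T(f) ∘ σ'_{B,X} : T(B) ⊗ X ⟶ Y` for `f : B ⊗ X ⟶ Y`, so that `ξ^A` is the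
transpose of `ext ev_A`. Transposing, the algebra laws for `ξ^A` become
`ext f ∘ (η ⊗ X) = f` and `ext f ∘ (μ ⊗ X) = ext (ext f)`. These hold because `σ'` is compatible
with `η` and `μ` (as `σ` is, conjugating by the symmetry) and `ξ` satisfies the algebra laws.
-/

namespace PaperMorita

variable {C : Type u} [Category.{v} C] [MonoidalCategory C] [SymmetricCategory C]

lemma dualStrength_naturality_left {T : C ⥤ C} (S : Strength T) {B B' : C} (f : B ⟶ B')
    (X : C) : (T.map f ▷ X) ≫ dualStrength S B' X = dualStrength S B X ≫ T.map (f ▷ X) := by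
  rw [dualStrength, dualStrength, BraidedCategory.braiding_naturality_left_assoc,
    reassoc_of% (S.naturality_right X f), Category.assoc, Category.assoc, ← T.map_comp,
    ← T.map_comp, BraidedCategory.braiding_naturality_right]

section StrongMonad

variable {M : Monad C} {S : Strength (M : C ⥤ C)}

lemma dualStrength_unit (hS : IsStrongMonadStrength M S) (B X : C) :
    (M.η.app B ▷ X) ≫ dualStrength S B X = M.η.app (B ⊗ X) := by
  rw [dualStrength, BraidedCategory.braiding_naturality_left_assoc, reassoc_of% (hS.1 X B),
    ← M.η.naturality, Functor.id_map]
  exact SymmetricCategory.symmetry_assoc _ _ _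

lemma dualStrength_mult (hS : IsStrongMonadStrength M S) (B X : C) :
    (M.μ.app B ▷ X) ≫ dualStrength S B X
      = dualStrength S (M.obj B) X ≫ M.map (dualStrength S B X) ≫ M.μ.app (B ⊗ X) := by
  have hββ : M.map (β_ X (M.obj B)).hom ≫ M.map (β_ (M.obj B) X).hom = 𝟙 _ := by
    rw [← M.map_comp, SymmetricCategory.symmetry, M.map_id]
  rw [dualStrength, dualStrength, BraidedCategory.braiding_naturality_left_assoc,
    reassoc_of% (hS.2 X B), ← M.μ.naturality]
  simp only [Functor.comp_map, Functor.map_comp, Category.assoc, reassoc_of% hββ]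
  rfl

variable (S) (Y : M.Algebra)

noncomputable def algebraExtend {B X : C} (f : B ⊗ X ⟶ Y.A) : M.obj B ⊗ X ⟶ Y.A :=
  dualStrength S B X ≫ M.map f ≫ Y.a

variable {S Y}

lemma unit_whiskerRight_algebraExtend (hS : IsStrongMonadStrength M S) {B X : C}
    (f : B ⊗ X ⟶ Y.A) : (M.η.app B ▷ X) ≫ algebraExtend S Y f = f := by
  rw [algebraExtend, reassoc_of% (dualStrength_unit hS B X), ← M.η.naturality_assoc]
  simp only [Functor.id_map, Y.unit]
  exact Category.comp_id f

lemma mult_whiskerRight_algebraExtend (hS : IsStrongMonadStrength M S) {B X : C}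
    (f : B ⊗ X ⟶ Y.A) :
    (M.μ.app B ▷ X) ≫ algebraExtend S Y f = algebraExtend S Y (algebraExtend S Y f) := by
  rw [algebraExtend, algebraExtend, reassoc_of% (dualStrength_mult hS B X),
    ← M.μ.naturality_assoc, Y.assoc]
  simp only [Functor.comp_obj, Functor.comp_map, Functor.map_comp, Category.assoc]

lemma map_whiskerRight_algebraExtend {B B' X : C} (g : B ⟶ B') (f : B' ⊗ X ⟶ Y.A) :
    (M.map g ▷ X) ≫ algebraExtend S Y f = algebraExtend S Y ((g ▷ X) ≫ f) := by
  rw [algebraExtend, algebraExtend, reassoc_of% (dualStrength_naturality_left S g X),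
    M.map_comp_assoc]

end StrongMonad

variable [MonoidalClosed C]

lemma comp_rcurry {X' X A B : C} (g : X' ⟶ X) (f : X ⊗ A ⟶ B) :
    g ≫ rcurry f = rcurry ((g ▷ A) ≫ f) := by
  rw [rcurry, rcurry, ← MonoidalClosed.curry_natural_left,
    BraidedCategory.braiding_naturality_right_assoc]

lemma rcurry_whiskerRight_ev {X A B : C} (f : X ⊗ A ⟶ B) : (rcurry f ▷ A) ≫ ev A B = f := by
  rw [rcurry, ev, BraidedCategory.braiding_naturality_left_assoc, ← MonoidalClosed.uncurry_eq,
    MonoidalClosed.uncurry_curry, SymmetricCategory.symmetry_assoc]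

lemma rcurry_ev (A B : C) : rcurry (ev A B) = 𝟙 ((ihom A).obj B) := by
  rw [rcurry, ev, SymmetricCategory.symmetry_assoc, ← MonoidalClosed.uncurry_id_eq_ev,
    MonoidalClosed.curry_uncurry]

lemma cotensorStructMap_eq_rcurry (M : Monad C) (S : Strength (M : C ⥤ C)) (Y : M.Algebra)
    (A : C) : cotensorStructMap M S Y A = rcurry (algebraExtend S Y (ev A Y.A)) :=
  rfl

/-- Let `(T, μ, η, σ)` be a strong monad on a closed symmetric monoidal
category, `(Y, ξ)` a `T`-algebra and `A` an object.  Then `([A,Y], ξ^A)`, where `ξ^A` is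
adjoint to `ξ ∘ T(ev_A) ∘ σ'_{[A,Y],A}`, is a `T`-algebra. -/
theorem cotensor_is_algebra (M : Monad C) (S : Strength (M : C ⥤ C))
    (hS : IsStrongMonadStrength M S) (Y : M.Algebra) (A : C) :
    M.η.app ((ihom A).obj Y.A) ≫ cotensorStructMap M S Y A = 𝟙 ((ihom A).obj Y.A) ∧
    M.μ.app ((ihom A).obj Y.A) ≫ cotensorStructMap M S Y A
      = (M : C ⥤ C).map (cotensorStructMap M S Y A) ≫ cotensorStructMap M S Y A := by
  rw [cotensorStructMap_eq_rcurry]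
  constructor
  · rw [comp_rcurry, unit_whiskerRight_algebraExtend hS, rcurry_ev]
  · rw [comp_rcurry, comp_rcurry, mult_whiskerRight_algebraExtend hS,
      map_whiskerRight_algebraExtend, rcurry_whiskerRight_ev]

end PaperMorita
end
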